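/- arXiv:1710.08350 — 2 statements merged into one kernel-verified Lean document; each statement's English description precedes it below -/
import Mathlib

section
/- For all polynomials p, q ∈ ℝ[x]: p ∼_Φ q if and only if p − q ∈ Z_Φ. -/
open MvPolynomial

/-- The Lie derivative of a polynomial along the polynomial vector field `F`. -/
noncomputable def lieDeriv {N : ℕ} (F : Fin N → MvPolynomial (Fin N) ℝ)
    (p : MvPolynomial (Fin N) ℝ) : MvPolynomial (Fin N) ℝ :=
  ∑ i, pderiv i p * F i

/-- `R` is an 𝓛-bisimulation for the initial value problem `Φ = (F, v₀)`. -/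
def IsLBisim {N : ℕ} (F : Fin N → MvPolynomial (Fin N) ℝ) (v₀ : Fin N → ℝ)
    (R : MvPolynomial (Fin N) ℝ → MvPolynomial (Fin N) ℝ → Prop) : Prop :=
  ∀ p q, R p q → eval v₀ p = eval v₀ q ∧ R (lieDeriv F p) (lieDeriv F q)

/-- `p ∼_Φ q`: the polynomials are related by some 𝓛-bisimulation. -/
def LBisimilar {N : ℕ} (F : Fin N → MvPolynomial (Fin N) ℝ) (v₀ : Fin N → ℝ)
    (p q : MvPolynomial (Fin N) ℝ) : Prop :=
  ∃ R, IsLBisim F v₀ R ∧ R p q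

/-- `Z_Φ`: the set of polynomials whose induced behaviour vanishes identically on `D`. -/
def Zset {N : ℕ} (x : ℝ → Fin N → ℝ) (D : Set ℝ) : Set (MvPolynomial (Fin N) ℝ) :=
  {p | ∀ t ∈ D, eval (x t) p = 0}

/-!
Along a solution, `d/dt p(x(t)) = (𝓛 p)(x(t))`, so the `n`-th derivative of
`t ↦ (p - q)(x(t))` at `0` is `(𝓛ⁿ (p - q))(v₀)`. A bisimulation relating `p` and `q` relates all
their `𝓛`-iterates, so all these derivatives vanish, and the analytic function `(p - q) ∘ x` then
vanishes on the whole interval `D`. Conversely, `p - q ∈ Z_Φ` is itself a bisimulation: its members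
vanish at `x 0 = v₀`, and `Z_Φ` is closed under `𝓛` because a function vanishing on an open set
has zero derivative there.
-/

section LieDeriv

variable {N : ℕ} (F : Fin N → MvPolynomial (Fin N) ℝ)

theorem lieDeriv_add (p q : MvPolynomial (Fin N) ℝ) :
    lieDeriv F (p + q) = lieDeriv F p + lieDeriv F q := by
  simp only [lieDeriv, map_add, add_mul, Finset.sum_add_distrib]

theorem lieDeriv_sub (p q : MvPolynomial (Fin N) ℝ) :
    lieDeriv F (p - q) = lieDeriv F p - lieDeriv F q := by
  simp only [lieDeriv, map_sub, sub_mul, Finset.sum_sub_distrib]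

theorem lieDeriv_mul (p q : MvPolynomial (Fin N) ℝ) :
    lieDeriv F (p * q) = lieDeriv F p * q + p * lieDeriv F q := by
  simp only [lieDeriv, Derivation.leibniz, smul_eq_mul, add_mul, Finset.sum_add_distrib,
    Finset.sum_mul, Finset.mul_sum]
  rw [add_comm]
  congr 1 <;> exact Finset.sum_congr rfl fun i _ => by ring

theorem lieDeriv_X (n : Fin N) : lieDeriv F (X n) = F n := by
  classical
  simp [lieDeriv, pderiv_X, Pi.single_apply]

theorem lieDeriv_iterate_sub (n : ℕ) (p q : MvPolynomial (Fin N) ℝ) :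
    (lieDeriv F)^[n] (p - q) = (lieDeriv F)^[n] p - (lieDeriv F)^[n] q :=
  iterate_map_sub (AddMonoidHom.mk' (lieDeriv F) (lieDeriv_add F)) n p q

end LieDeriv

theorem AnalyticOnNhd.eqOn_zero_of_iteratedDeriv_eq_zero {𝕜 E : Type*}
    [NontriviallyNormedField 𝕜] [CharZero 𝕜] [NormedAddCommGroup E] [NormedSpace 𝕜 E]
    [CompleteSpace E] {f : 𝕜 → E} {U : Set 𝕜} {z₀ : 𝕜} (hf : AnalyticOnNhd 𝕜 f U)
    (hU : IsPreconnected U) (h₀ : z₀ ∈ U) (hderiv : ∀ n, iteratedDeriv n f z₀ = 0) :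
    Set.EqOn f 0 U := by
  have horder : analyticOrderAt f z₀ = ⊤ :=
    ENat.eq_top_iff_forall_ge.2 fun n =>
      (natCast_le_analyticOrderAt_iff_iteratedDeriv_eq_zero (hf z₀ h₀)).2 fun i _ => hderiv i
  exact hf.eqOn_zero_of_preconnected_of_eventuallyEq_zero hU h₀ (analyticOrderAt_eq_top.1 horder)

section Trajectory

variable {N : ℕ} {F : Fin N → MvPolynomial (Fin N) ℝ} {x : ℝ → Fin N → ℝ} {D : Set ℝ}

theorem AnalyticOnNhd.mvPolynomial_eval (han : ∀ i, AnalyticOnNhd ℝ (fun t => x t i) D)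
    (p : MvPolynomial (Fin N) ℝ) : AnalyticOnNhd ℝ (fun t => eval (x t) p) D := by
  induction p using MvPolynomial.induction_on with
  | C a => simpa using analyticOnNhd_const
  | add p q hp hq =>
    simp only [map_add]
    exact fun t ht => (hp t ht).fun_add (hq t ht)
  | mul_X p n hp =>
    simp only [map_mul, eval_X]
    exact fun t ht => (hp t ht).fun_mul (han n t ht)

theorem HasDerivAt.mvPolynomial_eval {t : ℝ} (hx : HasDerivAt x (fun i => eval (x t) (F i)) t)
    (p : MvPolynomial (Fin N) ℝ) :
    HasDerivAt (fun s => eval (x s) p) (eval (x t) (lieDeriv F p)) t := by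
  induction p using MvPolynomial.induction_on with
  | C a => simpa [lieDeriv] using hasDerivAt_const t a
  | add p q hp hq => simpa [lieDeriv_add] using hp.fun_add hq
  | mul_X p n hp => simpa [lieDeriv_mul, lieDeriv_X] using hp.fun_mul (hasDerivAt_pi.1 hx n)

theorem iteratedDeriv_eval_eqOn (hD : IsOpen D)
    (hsol : ∀ t ∈ D, HasDerivAt x (fun i => eval (x t) (F i)) t)
    (n : ℕ) (p : MvPolynomial (Fin N) ℝ) :
    Set.EqOn (iteratedDeriv n fun t => eval (x t) p)
      (fun t => eval (x t) ((lieDeriv F)^[n] p)) D := by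
  induction n with
  | zero => exact fun t _ => rfl
  | succ n ih =>
    intro t ht
    rw [iteratedDeriv_succ, Function.iterate_succ_apply',
      (Filter.eventuallyEq_of_mem (hD.mem_nhds ht) ih).deriv_eq]
    exact ((hsol t ht).mvPolynomial_eval _).deriv

theorem lieDeriv_mem_Zset (hD : IsOpen D)
    (hsol : ∀ t ∈ D, HasDerivAt x (fun i => eval (x t) (F i)) t)
    {p : MvPolynomial (Fin N) ℝ} (hp : p ∈ Zset x D) :
    lieDeriv F p ∈ Zset x D := fun t ht =>
  ((hsol t ht).mvPolynomial_eval p).unique <|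
    (hasDerivAt_const t 0).congr_of_eventuallyEq (Filter.eventuallyEq_of_mem (hD.mem_nhds ht) hp)

theorem isLBisim_sub_mem_Zset (hD : IsOpen D)
    (hsol : ∀ t ∈ D, HasDerivAt x (fun i => eval (x t) (F i)) t)
    (h0 : (0 : ℝ) ∈ D) :
    IsLBisim F (x 0) fun p q => p - q ∈ Zset x D := fun p q hpq =>
  ⟨sub_eq_zero.1 (by simpa using hpq 0 h0), by
    simpa [lieDeriv_sub] using lieDeriv_mem_Zset hD hsol hpq⟩

end Trajectory

theorem LBisimilar.eval_iterate_lieDeriv_sub_eq_zero {N : ℕ} {F : Fin N → MvPolynomial (Fin N) ℝ}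
    {v₀ : Fin N → ℝ} {p q : MvPolynomial (Fin N) ℝ} (h : LBisimilar F v₀ p q) (n : ℕ) :
    eval v₀ ((lieDeriv F)^[n] (p - q)) = 0 := by
  obtain ⟨R, hR, hpq⟩ := h
  have hiter : ∀ n, R ((lieDeriv F)^[n] p) ((lieDeriv F)^[n] q) := by
    intro n
    induction n with
    | zero => exact hpq
    | succ n ih => simpa only [Function.iterate_succ_apply'] using (hR _ _ ih).2
  rw [lieDeriv_iterate_sub, map_sub, (hR _ _ (hiter n)).1, sub_self]

theorem stmt7_general
    (N : ℕ)
    (F : Fin N → MvPolynomial (Fin N) ℝ) (v₀ : Fin N → ℝ)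
    (D : Set ℝ) (hD : IsOpen D) (hDc : D.OrdConnected) (h0 : (0 : ℝ) ∈ D)
    (x : ℝ → Fin N → ℝ)
    (hsol : ∀ t ∈ D, HasDerivAt x (fun i => eval (x t) (F i)) t)
    (hx0 : x 0 = v₀)
    (han : ∀ i, AnalyticOnNhd ℝ (fun t => x t i) D)
    (p q : MvPolynomial (Fin N) ℝ) :
    LBisimilar F v₀ p q ↔ p - q ∈ Zset x D := by
  subst hx0
  refine ⟨fun hpq => ?_, fun hpq => ⟨_, isLBisim_sub_mem_Zset hD hsol h0, hpq⟩⟩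
  refine (AnalyticOnNhd.mvPolynomial_eval han (p - q)).eqOn_zero_of_iteratedDeriv_eq_zero
    hDc.isPreconnected h0 fun n => ?_
  rw [iteratedDeriv_eval_eqOn hD hsol n (p - q) h0]
  exact hpq.eval_iterate_lieDeriv_sub_eq_zero n

/-- `p ∼_Φ q` iff `p − q ∈ Z_Φ`. -/
theorem stmt7
    (N : ℕ) (hN : 1 ≤ N)
    (F : Fin N → MvPolynomial (Fin N) ℝ) (v₀ : Fin N → ℝ)
    (D : Set ℝ) (hD : IsOpen D) (hDc : D.OrdConnected) (h0 : (0 : ℝ) ∈ D)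
    (x : ℝ → Fin N → ℝ)
    (hsol : ∀ t ∈ D, HasDerivAt x (fun i => eval (x t) (F i)) t)
    (hx0 : x 0 = v₀)
    (han : ∀ i, AnalyticOnNhd ℝ (fun t => x t i) D)
    (p q : MvPolynomial (Fin N) ℝ) :
    LBisimilar F v₀ p q ↔ p - q ∈ Zset x D :=
  stmt7_general N F v₀ D hD hDc h0 x hsol hx0 han p q
end

section
/- Exactness of the approximate linearization: in the setting of the approximate linearization, assume in addition that the representation 𝓛⁽ʲ⁾(p) = ∑_{k=1}^M (L^j p̂)_k · α_k holds for every j ≥ 0, and that the Krylov space K_m is invariant, i.e. L^T K_m ⊆ K_m. Then for every j ≥ 0 the j-th derivative at t = 0 of t ↦ p(x(t)) equals the j-th derivative at t = 0 of t ↦ p̂^T B y(t); in particular, if t ↦ p(x(t)) is real-analytic on the interval D, then p(x(t)) = p̂^T B y(t) for all t ∈ D. -/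
/-!
The two sides have the same Taylor coefficients at `0`. Along the flow, the `j`-th derivative
of `p(x(t))` is `𝓛⁽ʲ⁾(p)(x(t))`, which the representation turns into `(Lʲ p̂) ⬝ φ` at `t = 0`.
On the other side, the `j`-th derivative of `p̂ᵀ B y(t)` at `0` is `p̂ᵀ B Aʲ Bᵀ φ`; as `B Bᵀ`
fixes `K_m` and `K_m` is `Lᵀ`-invariant, `B Aʲ Bᵀ φ = (Lᵀ)ʲ φ`, so both equal `p̂ᵀ (Lᵀ)ʲ φ`.
A solution of a linear ODE is `t ↦ exp(tA) y(0)`, hence analytic on all of `ℝ`; so when `p ∘ x`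
is analytic on the interval `D`, equality of all derivatives at `0` gives equality near `0`,
and the identity theorem spreads it over `D`.
-/

open MvPolynomial Matrix Filter Asymptotics
open scoped Topology

theorem MvPolynomial.hasDerivAt_eval_comp {𝕜 σ : Type*} [NontriviallyNormedField 𝕜] [Fintype σ]
    (q : MvPolynomial σ 𝕜) {x : 𝕜 → σ → 𝕜} {v : σ → 𝕜} {t : 𝕜} (hx : HasDerivAt x v t) :
    HasDerivAt (fun s => eval (x s) q) (∑ i, eval (x t) (pderiv i q) * v i) t := by
  induction q using MvPolynomial.induction_on with
  | C c => simpa using hasDerivAt_const t c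
  | add p q hp hq => simpa only [map_add, add_mul, Finset.sum_add_distrib] using hp.fun_add hq
  | mul_X q i hq =>
    classical
    simp only [map_mul, eval_X]
    refine (hq.fun_mul (hasDerivAt_pi.1 hx i)).congr_deriv ?_
    simp only [pderiv_mul, pderiv_X, map_add, map_mul, eval_X, add_mul,
        Finset.sum_add_distrib, Finset.sum_mul]
    simp [Pi.single_apply, apply_ite, mul_right_comm]

section Flow

variable {N : ℕ} {F : Fin N → MvPolynomial (Fin N) ℝ} {x : ℝ → Fin N → ℝ}

theorem hasDerivAt_eval_lieDeriv (q : MvPolynomial (Fin N) ℝ) {t : ℝ}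
    (hx : HasDerivAt x (fun i => eval (x t) (F i)) t) :
    HasDerivAt (fun s => eval (x s) q) (eval (x t) (lieDeriv F q)) t := by
  simpa [lieDeriv] using q.hasDerivAt_eval_comp hx

theorem iteratedDerivWithin_eval_comp_eq_lieDeriv {D : Set ℝ} (hD : IsOpen D)
    (hsol : ∀ t ∈ D, HasDerivAt x (fun i => eval (x t) (F i)) t) (j : ℕ)
    (p : MvPolynomial (Fin N) ℝ) {t : ℝ} (ht : t ∈ D) :
    iteratedDerivWithin j (fun s => eval (x s) p) D t = eval (x t) ((lieDeriv F)^[j] p) := by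
  induction j generalizing p with
  | zero => simp
  | succ j ih =>
    have hderiv : Set.EqOn (derivWithin (fun s => eval (x s) p) D)
        (fun s => eval (x s) (lieDeriv F p)) D := fun s hs =>
      (derivWithin_of_isOpen hD hs).trans (hasDerivAt_eval_lieDeriv p (hsol s hs)).deriv
    rw [iteratedDerivWithin_succ', iteratedDerivWithin_congr hderiv ht, ih,
      Function.iterate_succ_apply]

end Flow

section DotProduct

variable {𝕜 n : Type*} [NontriviallyNormedField 𝕜] [Fintype n]

theorem HasDerivAt.const_dotProduct {y : 𝕜 → n → 𝕜} {y' : n → 𝕜} {t : 𝕜}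
    (hy : HasDerivAt y y' t) (c : n → 𝕜) :
    HasDerivAt (fun s => c ⬝ᵥ y s) (c ⬝ᵥ y') t :=
  HasDerivAt.fun_sum fun i _ => (hasDerivAt_pi.1 hy i).const_mul (c i)

theorem iteratedDeriv_dotProduct_of_hasDerivAt_mulVec [DecidableEq n]
    {A : Matrix n n 𝕜} {y : 𝕜 → n → 𝕜} (hy : ∀ t, HasDerivAt y (A *ᵥ y t) t)
    (j : ℕ) (c : n → 𝕜) (t : 𝕜) :
    iteratedDeriv j (fun s => c ⬝ᵥ y s) t = c ⬝ᵥ (A ^ j *ᵥ y t) := by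
  induction j generalizing c with
  | zero => simp
  | succ j ih =>
    have hderiv : deriv (fun s => c ⬝ᵥ y s) = fun s => (c ᵥ* A) ⬝ᵥ y s := by
      funext s
      rw [((hy s).const_dotProduct c).deriv, dotProduct_mulVec]
    rw [iteratedDeriv_succ', hderiv, ih, ← dotProduct_mulVec, mulVec_mulVec, ← pow_succ']

end DotProduct

section LinearODE

variable {E : Type*} [NormedAddCommGroup E] [NormedSpace ℝ E] [CompleteSpace E]
  {T : E →L[ℝ] E} {y : ℝ → E}

theorem eq_exp_smul_apply_of_hasDerivAt (hy : ∀ t, HasDerivAt y (T (y t)) t) :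
    y = fun t => NormedSpace.exp (t • T) (y 0) := by
  have hexp : ∀ t, HasDerivAt (fun s => NormedSpace.exp (s • T) (y 0))
      (T (NormedSpace.exp (t • T) (y 0))) t := fun t => by
    simpa using (hasDerivAt_exp_smul_const' (𝕂 := ℝ) T t).clm_apply (hasDerivAt_const t (y 0))
  exact ODE_solution_unique_univ (v := fun _ => T) (s := fun _ => Set.univ) (t₀ := 0)
    (fun _ => T.lipschitz.lipschitzOnWith) (fun t => ⟨hy t, trivial⟩)
    (fun t => ⟨hexp t, trivial⟩) (by simp)

theorem analyticAt_of_hasDerivAt_apply (hy : ∀ t, HasDerivAt y (T (y t)) t) (t : ℝ) :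
    AnalyticAt ℝ y t := by
  rw [eq_exp_smul_apply_of_hasDerivAt hy]
  exact (ContinuousLinearMap.apply ℝ E (y 0)).analyticAt _ |>.comp
    ((NormedSpace.exp_analytic _).comp (analyticAt_id.smul analyticAt_const))

end LinearODE

theorem analyticAt_of_hasDerivAt_mulVec {n : Type*} [Fintype n] [DecidableEq n]
    {A : Matrix n n ℝ} {y : ℝ → n → ℝ} (hy : ∀ t, HasDerivAt y (A *ᵥ y t) t) (t : ℝ) :
    AnalyticAt ℝ y t :=
  analyticAt_of_hasDerivAt_apply (T := (toLin' A).toContinuousLinearMap) hy t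

theorem AnalyticAt.eventuallyEq_of_iteratedDeriv_eq {𝕜 E : Type*} [NontriviallyNormedField 𝕜]
    [CharZero 𝕜] [NormedAddCommGroup E] [NormedSpace 𝕜 E] [CompleteSpace E] {f g : 𝕜 → E} {z : 𝕜}
    (hf : AnalyticAt 𝕜 f z) (hg : AnalyticAt 𝕜 g z)
    (h : ∀ n, iteratedDeriv n f z = iteratedDeriv n g z) : f =ᶠ[𝓝 z] g := by
  have htop : analyticOrderAt (f - g) z = ⊤ := ENat.eq_top_iff_forall_ge.2 fun n =>
    (natCast_le_analyticOrderAt_iff_iteratedDeriv_eq_zero (hf.sub hg)).2 fun i _ => by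
      rw [iteratedDeriv_sub hf.contDiffAt hg.contDiffAt, h, sub_self]
  filter_upwards [analyticOrderAt_eq_top.1 htop] with w hw
  exact sub_eq_zero.1 hw

section Krylov

variable {R m n : Type*} [CommSemiring R] [Fintype m] [Fintype n]

theorem Matrix.pow_mulVec_mem [DecidableEq m] {K : Submodule R (m → R)} {T : Matrix m m R}
    (hK : ∀ w ∈ K, T *ᵥ w ∈ K) {v : m → R} (hv : v ∈ K) (j : ℕ) : (T ^ j) *ᵥ v ∈ K := by
  induction j with
  | zero => simpa using hv
  | succ j ih => rw [pow_succ', ← mulVec_mulVec]; exact hK _ ih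

theorem Matrix.mulVec_transpose_mulVec_of_mem_span [DecidableEq n] {B : Matrix m n R}
    (hB : Bᵀ * B = 1) {w : m → R} (hw : w ∈ Submodule.span R (Set.range Bᵀ)) :
    B *ᵥ (Bᵀ *ᵥ w) = w := by
  obtain ⟨u, rfl⟩ : w ∈ LinearMap.range B.mulVecLin := by rwa [range_mulVecLin]
  rw [mulVecLin_apply, mulVec_mulVec, mulVec_mulVec, Matrix.mul_assoc, hB, Matrix.mul_one]

theorem Matrix.mulVec_pow_compression_mulVec [DecidableEq m] [DecidableEq n] {B : Matrix m n R}
    {T : Matrix m m R} {K : Submodule R (m → R)} (hB : ∀ w ∈ K, B *ᵥ (Bᵀ *ᵥ w) = w)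
    (hK : ∀ w ∈ K, T *ᵥ w ∈ K) {v : m → R} (hv : v ∈ K) (j : ℕ) :
    B *ᵥ ((Bᵀ * T * B) ^ j *ᵥ (Bᵀ *ᵥ v)) = (T ^ j) *ᵥ v := by
  induction j with
  | zero => simpa using hB v hv
  | succ j ih =>
    calc B *ᵥ ((Bᵀ * T * B) ^ (j + 1) *ᵥ (Bᵀ *ᵥ v))
        = B *ᵥ (Bᵀ *ᵥ (T *ᵥ (B *ᵥ ((Bᵀ * T * B) ^ j *ᵥ (Bᵀ *ᵥ v))))) := by
          simp only [pow_succ', mulVec_mulVec, Matrix.mul_assoc]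
      _ = (T ^ (j + 1)) *ᵥ v := by
          rw [ih, hB _ (hK _ (pow_mulVec_mem hK hv j)), mulVec_mulVec, ← pow_succ']

end Krylov

theorem stmt19_general
    (N : ℕ)
    (F : Fin N → MvPolynomial (Fin N) ℝ) (v₀ : Fin N → ℝ)
    (D : Set ℝ) (hD : IsOpen D) (hDc : D.OrdConnected) (h0 : (0 : ℝ) ∈ D)
    (x : ℝ → Fin N → ℝ)
    (hsol : ∀ t ∈ D, HasDerivAt x (fun i => eval (x t) (F i)) t)
    (hx0 : x 0 = v₀)
    (m : ℕ) (hm : 1 ≤ m)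
    (M : ℕ) (α : Fin M → MvPolynomial (Fin N) ℝ)
    (p : MvPolynomial (Fin N) ℝ)
    (phat : Fin M → ℝ) (L : Matrix (Fin M) (Fin M) ℝ)
    (hrep : ∀ j : ℕ, (lieDeriv F)^[j] p = ∑ k, ((L ^ j) *ᵥ phat) k • α k)
    (φ : Fin M → ℝ) (hφ : φ = fun k => eval v₀ (α k))
    (hinv : ∀ w ∈ Submodule.span ℝ {w : Fin M → ℝ | ∃ j < m, w = (Lᵀ ^ j) *ᵥ φ},
      Lᵀ *ᵥ w ∈ Submodule.span ℝ {w : Fin M → ℝ | ∃ j < m, w = (Lᵀ ^ j) *ᵥ φ})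
    (l : ℕ) (B : Matrix (Fin M) (Fin l) ℝ)
    (hortho : Bᵀ * B = 1)
    (hKspan : Submodule.span ℝ (Set.range Bᵀ)
      = Submodule.span ℝ {w : Fin M → ℝ | ∃ j < m, w = (Lᵀ ^ j) *ᵥ φ})
    (A : Matrix (Fin l) (Fin l) ℝ) (hA : A = Bᵀ * Lᵀ * B)
    (y : ℝ → Fin l → ℝ)
    (hy : ∀ t, HasDerivAt y (A *ᵥ y t) t)
    (hy0 : y 0 = Bᵀ *ᵥ φ) :
    (∀ j : ℕ, iteratedDerivWithin j (fun t => eval (x t) p) D 0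
      = iteratedDeriv j (fun t => phat ⬝ᵥ (B *ᵥ y t)) 0) ∧
    (AnalyticOnNhd ℝ (fun t => eval (x t) p) D →
      ∀ t ∈ D, eval (x t) p = phat ⬝ᵥ (B *ᵥ y t)) := by
  set K := Submodule.span ℝ {w : Fin M → ℝ | ∃ j < m, w = (Lᵀ ^ j) *ᵥ φ}
  have hφK : φ ∈ K := Submodule.subset_span ⟨0, hm, by simp⟩
  have hproj : ∀ w ∈ K, B *ᵥ (Bᵀ *ᵥ w) = w := fun w hw =>
    mulVec_transpose_mulVec_of_mem_span hortho (hKspan ▸ hw)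
  have hderiv (j : ℕ) : iteratedDerivWithin j (fun t => eval (x t) p) D 0
      = iteratedDeriv j (fun t => phat ⬝ᵥ (B *ᵥ y t)) 0 := by
    simp_rw [dotProduct_mulVec phat B]
    calc iteratedDerivWithin j (fun t => eval (x t) p) D 0
        = (L ^ j *ᵥ phat) ⬝ᵥ φ := by
          rw [iteratedDerivWithin_eval_comp_eq_lieDeriv hD hsol j p h0, hx0, hrep, hφ]
          simp [dotProduct]
      _ = phat ⬝ᵥ (B *ᵥ (A ^ j *ᵥ (Bᵀ *ᵥ φ))) := by
          rw [hA, mulVec_pow_compression_mulVec hproj hinv hφK, dotProduct_mulVec,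
            ← transpose_pow, vecMul_transpose]
      _ = iteratedDeriv j (fun t => (phat ᵥ* B) ⬝ᵥ y t) 0 := by
          rw [iteratedDeriv_dotProduct_of_hasDerivAt_mulVec hy, hy0, dotProduct_mulVec]
  have hanalytic : AnalyticOnNhd ℝ (fun t => phat ⬝ᵥ (B *ᵥ y t)) D := fun t _ => by
    simp_rw [dotProduct_mulVec phat B, dotProduct]
    exact Finset.analyticAt_fun_sum _ fun i _ =>
      analyticAt_const.mul (analyticAt_pi_iff.1 (analyticAt_of_hasDerivAt_mulVec hy t) i)
  refine ⟨hderiv, fun hf t ht => ?_⟩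
  refine hf.eqOn_of_preconnected_of_eventuallyEq hanalytic hDc.isPreconnected h0 ?_ ht
  refine (hf 0 h0).eventuallyEq_of_iteratedDeriv_eq (hanalytic 0 h0) fun j => ?_
  rw [← iteratedDerivWithin_of_isOpen hD h0, hderiv]

/-- exactness of the approximate linearization: in the setting of
the approximate linearization, if `𝓛⁽ʲ⁾(p) = ∑ₖ (Lʲ p̂)ₖ αₖ` holds for all `j ≥ 0`
and the Krylov space `K_m` is invariant (`Lᵀ K_m ⊆ K_m`), then for every `j ≥ 0`
the `j`-th derivative at `0` of `t ↦ p(x(t))` equals that of `t ↦ p̂ᵀ B y(t)`; in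
particular, if `t ↦ p(x(t))` is real-analytic on `D`, then `p(x(t)) = p̂ᵀ B y(t)`
for all `t ∈ D`. -/
theorem stmt19
    (N : ℕ) (hN : 1 ≤ N)
    (F : Fin N → MvPolynomial (Fin N) ℝ) (v₀ : Fin N → ℝ)
    (D : Set ℝ) (hD : IsOpen D) (hDc : D.OrdConnected) (h0 : (0 : ℝ) ∈ D)
    (x : ℝ → Fin N → ℝ)
    (hsol : ∀ t ∈ D, HasDerivAt x (fun i => eval (x t) (F i)) t)
    (hx0 : x 0 = v₀)
    (m : ℕ) (hm : 1 ≤ m)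
    (M : ℕ) (α : Fin M → MvPolynomial (Fin N) ℝ)
    (p : MvPolynomial (Fin N) ℝ)
    (phat : Fin M → ℝ) (L : Matrix (Fin M) (Fin M) ℝ)
    (hrep : ∀ j : ℕ, (lieDeriv F)^[j] p = ∑ k, ((L ^ j) *ᵥ phat) k • α k)
    (φ : Fin M → ℝ) (hφ : φ = fun k => eval v₀ (α k))
    (hinv : ∀ w ∈ Submodule.span ℝ {w : Fin M → ℝ | ∃ j < m, w = (Lᵀ ^ j) *ᵥ φ},
      Lᵀ *ᵥ w ∈ Submodule.span ℝ {w : Fin M → ℝ | ∃ j < m, w = (Lᵀ ^ j) *ᵥ φ})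
    (l : ℕ) (B : Matrix (Fin M) (Fin l) ℝ)
    (hortho : Bᵀ * B = 1)
    (hKspan : Submodule.span ℝ (Set.range Bᵀ)
      = Submodule.span ℝ {w : Fin M → ℝ | ∃ j < m, w = (Lᵀ ^ j) *ᵥ φ})
    (A : Matrix (Fin l) (Fin l) ℝ) (hA : A = Bᵀ * Lᵀ * B)
    (y : ℝ → Fin l → ℝ)
    (hy : ∀ t, HasDerivAt y (A *ᵥ y t) t)
    (hy0 : y 0 = Bᵀ *ᵥ φ) :
    (∀ j : ℕ, iteratedDerivWithin j (fun t => eval (x t) p) D 0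
      = iteratedDeriv j (fun t => phat ⬝ᵥ (B *ᵥ y t)) 0) ∧
    (AnalyticOnNhd ℝ (fun t => eval (x t) p) D →
      ∀ t ∈ D, eval (x t) p = phat ⬝ᵥ (B *ᵥ y t)) :=
  stmt19_general N F v₀ D hD hDc h0 x hsol hx0 m hm M α p phat L hrep φ hφ hinv l B hortho hKspan A
    hA y hy hy0
end
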